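/- arXiv:1509.02101 — 7 statements merged into one kernel-verified Lean document; each statement's English description precedes it below -/
import Mathlib

section
/- Let A be a commutative ring, I an ideal of A, and assume A is complete and separated with respect to the I-adic topology. Let d ≥ 0, let ω ∈ A be a unit, and let α ∈ A[[x]] be a formal power series such that α ≡ ω·x^d modulo the ideal of A[[x]] generated by x^{d+1} together with (the image of) I. Then the quotient ring A[[x]]/(α) is a free A-module with basis the images of 1, x, x², …, x^{d−1}. -/
/-!
Modulo `I`, the series `α` becomes `ω̄ Xᵈ + O(Xᵈ⁺¹)` with `ω̄` a unit of `A ⧸ I`, so its reduction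
has order exactly `d`; and its `d`-th coefficient, congruent to `ω` modulo `I`, is a unit of `A`
because `I` lies in the Jacobson radical of the `I`-adically complete ring `A`. Thus `α` is a
Weierstrass divisor, and `I`-adic Weierstrass division by `α` identifies `A⟦X⟧ ⧸ (α)` with the
polynomials of degree `< d`.
-/

namespace PowerSeries

variable {A : Type*} [CommRing A]

section QuotientBasis

open Polynomial

variable {g : A⟦X⟧} {I : Ideal A} [IsAdicComplete I A]

noncomputable def IsWeierstrassDivisorAt.quotientEquivDegreeLT (H : g.IsWeierstrassDivisorAt I) :
    (A⟦X⟧ ⧸ Ideal.span {g}) ≃ₗ[A] degreeLT A (g.map (Ideal.Quotient.mk I)).order.toNat where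
  toLinearMap := H.mod'.codRestrict _ fun f ↦ by
    obtain ⟨f, rfl⟩ := Ideal.Quotient.mk_surjective f
    exact mem_degreeLT.2 (H.isWeierstrassDivisionAt_div_mod f).degree_lt
  invFun r := Ideal.Quotient.mk _ (r : A⟦X⟧)
  left_inv _ := H.mk_mod'_eq_self
  right_inv r := Subtype.ext (H.mod_coe_eq_self (mem_degreeLT.1 r.2))

theorem IsWeierstrassDivisorAt.quotientEquivDegreeLT_symm_apply (H : g.IsWeierstrassDivisorAt I)
    (r : degreeLT A (g.map (Ideal.Quotient.mk I)).order.toNat) :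
    H.quotientEquivDegreeLT.symm r = Ideal.Quotient.mk _ (r : A⟦X⟧) :=
  rfl

theorem IsWeierstrassDivisorAt.exists_basis_quotient (H : g.IsWeierstrassDivisorAt I) {n : ℕ}
    (hn : (g.map (Ideal.Quotient.mk I)).order.toNat = n) :
    ∃ b : Module.Basis (Fin n) A (A⟦X⟧ ⧸ Ideal.span {g}),
      ∀ i : Fin n, b i = Ideal.Quotient.mk _ (X ^ (i : ℕ)) := by
  subst hn
  refine ⟨(Pi.basisFun A _).map ((degreeLTEquiv A _).symm.trans H.quotientEquivDegreeLT.symm),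
    fun i ↦ ?_⟩
  simp [quotientEquivDegreeLT_symm_apply, degreeLTEquiv, Pi.single_apply, apply_ite, X_pow_eq]

end QuotientBasis

theorem coeff_of_X_pow_succ_dvd_sub {R : Type*} [Ring R] {φ : R⟦X⟧} {c : R} {d : ℕ}
    (h : X ^ (d + 1) ∣ φ - C c * X ^ d) : coeff d φ = c ∧ ∀ i < d, coeff i φ = 0 := by
  rw [X_pow_dvd_iff] at h
  refine ⟨?_, fun i hi ↦ ?_⟩
  · simpa [coeff_C_mul_X_pow, sub_eq_zero] using h d d.lt_succ_self
  · simpa [coeff_C_mul_X_pow, hi.ne] using h i (by omega)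

theorem X_pow_dvd_map_sub_of_mem_sup {I : Ideal A} {φ ψ : A⟦X⟧} {n : ℕ}
    (h : φ - ψ ∈ Ideal.span {(X : A⟦X⟧) ^ n} ⊔ Ideal.map C I) :
    X ^ n ∣ φ.map (Ideal.Quotient.mk I) - ψ.map (Ideal.Quotient.mk I) := by
  obtain ⟨p, hp, m, hm, hpm⟩ := Submodule.mem_sup.mp h
  have hm0 : m ∈ RingHom.ker (map (Ideal.Quotient.mk I)) :=
    Ideal.map_le_iff_le_comap.2 (fun a ha ↦ by simp [Ideal.Quotient.eq_zero_iff_mem.2 ha]) hm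
  obtain ⟨q, rfl⟩ := Ideal.mem_span_singleton.1 hp
  exact ⟨q.map (Ideal.Quotient.mk I), by
    rw [← map_sub, ← hpm, map_add, RingHom.mem_ker.1 hm0, add_zero, map_mul, map_pow, map_X]⟩

end PowerSeries

open PowerSeries

/-- Weierstrass preparation (Hopkins–Kuhn–Ravenel form): if `A` is complete and
separated in the `I`-adic topology, `ω` is a unit and
`α ≡ ω·x^d mod (x^{d+1}, I)`, then `A[[x]]/(α)` is a free `A`-module with basis
the images of `1, x, …, x^{d-1}`. -/
theorem weierstrass_preparation_quotient_free
    {A : Type*} [CommRing A] (I : Ideal A) [IsAdicComplete I A]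
    (d : ℕ) (ω : A) (hω : IsUnit ω) (α : PowerSeries A)
    (hα : α - PowerSeries.C ω * PowerSeries.X ^ d ∈
      Ideal.span {(PowerSeries.X : PowerSeries A) ^ (d + 1)} ⊔
        Ideal.map (PowerSeries.C (R := A)) I) :
    ∃ b : Module.Basis (Fin d) A (PowerSeries A ⧸ Ideal.span {α}),
      ∀ i : Fin d, b i = Ideal.Quotient.mk (Ideal.span {α}) (PowerSeries.X ^ (i : ℕ)) := by
  rcases eq_or_ne I ⊤ with rfl | hI
  · have : Subsingleton A := IsAdicComplete.subsingleton A ‹_›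
    exact ⟨.ofRepr (LinearEquiv.ofSubsingleton _ _), fun _ ↦ Subsingleton.elim _ _⟩
  have : Nontrivial (A ⧸ I) := Ideal.Quotient.nontrivial_iff.2 hI
  have hdvd : X ^ (d + 1) ∣ α.map (Ideal.Quotient.mk I) - C (Ideal.Quotient.mk I ω) * X ^ d := by
    simpa using X_pow_dvd_map_sub_of_mem_sup hα
  obtain ⟨hd, hlt⟩ := coeff_of_X_pow_succ_dvd_sub hdvd
  have hord : (α.map (Ideal.Quotient.mk I)).order.toNat = d := by
    rw [order_eq_nat.2 ⟨hd ▸ (hω.map _).ne_zero, hlt⟩, ENat.toNat_natCast]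
  have := isLocalHom_of_le_jacobson_bot I (IsAdicComplete.le_jacobson_bot I)
  have H : α.IsWeierstrassDivisorAt I := by
    rw [IsWeierstrassDivisorAt, hord]
    exact isUnit_of_map_unit (Ideal.Quotient.mk I) _ (by rw [← coeff_map, hd]; exact hω.map _)
  exact H.exists_basis_quotient hord
end

section
/- Let R be a commutative ring, n ≥ 0, and let r₀, r₁, …, r_n ∈ R be elements such that for each 0 ≤ k ≤ n the image of r_k in R/(r₀,…,r_{k−1}) is a nonzerodivisor (for k = 0 this means r₀ is a nonzerodivisor in R). Let M be an R-module. Then Tor₁^R(R/(r₀,…,r_k), M) = 0 for every 0 ≤ k ≤ n if and only if for every 0 ≤ k ≤ n multiplication by r_k is injective on the quotient module M/(r₀,…,r_{k−1})M (for k = 0 this means multiplication by r₀ is injective on M). -/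
/-!
Tor is computed by tensoring a fixed projective resolution `P` of `M`, and since the terms of `P`
are flat, `X ↦ X ⊗ P` turns the short exact sequence `0 → R/I --a--> R/I → R/(I + (a)) → 0`
(for `a` regular on `R/I`) into a short exact sequence of complexes. When `Tor₁(R/I, M) = 0`,
its long exact homology sequence shows that `Tor₁(R/(I + (a)), M)` vanishes iff multiplication
by `a` is injective on `Tor₀(R/I, M) = M/IM`. Induction along the sequence, starting from
`Tor₁(R, M) = 0`, gives the equivalence.
-/

open CategoryTheory Limits MonoidalCategory Pointwise TensorProduct

universe u

theorem Nat.forall_le_succ_iff_of_step {p q : ℕ → Prop} {n : ℕ} (h₀ : p 0)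
    (step : ∀ k ≤ n, p k → (p (k + 1) ↔ q k)) :
    (∀ k ≤ n, p (k + 1)) ↔ ∀ k ≤ n, q k := by
  refine ⟨fun hp k hk => (step k hk ?_).1 (hp k hk), fun hq k hk => ?_⟩
  · cases k with
    | zero => exact h₀
    | succ k => exact hp k (by omega)
  · induction k with
    | zero => exact (step 0 hk h₀).2 (hq 0 hk)
    | succ k ih => exact (step _ hk (ih (by omega))).2 (hq _ hk)

lemma Ideal.span_image_Iio_succ {R : Type*} [Semiring R] (r : ℕ → R) (k : ℕ) :
    Ideal.span (r '' Set.Iio (k + 1)) = Ideal.span (r '' Set.Iio k) ⊔ Ideal.span {r k} := by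
  rw [Set.Iio_add_one_eq_Iic, ← Set.Iio_insert, Set.image_insert_eq, Ideal.span_insert, sup_comm]

lemma Ideal.Quotient.isSMulRegular_iff {R : Type*} [CommRing R] (I : Ideal R) (a : R) :
    IsSMulRegular (R ⧸ I) a ↔ Ideal.Quotient.mk I a ∈ nonZeroDivisors (R ⧸ I) := by
  rw [isSMulRegular_iff_right_eq_zero_of_smul, mem_nonZeroDivisors_iff_right]
  simp [Algebra.smul_def, mul_comm]

noncomputable def Ideal.quotSMulTopEquivQuotSup {R : Type*} [CommRing R] (I : Ideal R) (a : R) :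
    QuotSMulTop a (R ⧸ I) ≃ₗ[R] R ⧸ (I ⊔ Ideal.span {a}) :=
  Submodule.quotEquivOfEq _ _
      (by rw [Submodule.map_pointwise_smul, Submodule.map_top, Submodule.range_mkQ]) ≪≫ₗ
    Submodule.quotientQuotientEquivQuotientSup I (a • ⊤ : Submodule R R) ≪≫ₗ
    Submodule.quotEquivOfEq _ _
      (by rw [← Submodule.ideal_span_singleton_smul, smul_eq_mul, Ideal.mul_top])

namespace HomologicalComplex

variable {C : Type*} [Category C] [Preadditive C] {ι : Type*} {c : ComplexShape ι}

lemma homologyMap_smul {R : Type*} [Semiring R] [Linear R C] [CategoryWithHomology C]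
    {K L : HomologicalComplex C c} (a : R) (φ : K ⟶ L) (i : ι) :
    homologyMap (a • φ) i = a • homologyMap φ i :=
  ShortComplex.homologyMap_smul ((shortComplexFunctor C c i).map φ) a

section Monoidal

variable [MonoidalCategory C] [MonoidalPreadditive C]

def mapTensorLeft (K : HomologicalComplex C c) : C ⥤ HomologicalComplex C c where
  obj X := (((tensoringLeft C).obj X).mapHomologicalComplex c).obj K
  map f := (NatTrans.mapHomologicalComplex ((tensoringLeft C).map f) c).app K

instance (K : HomologicalComplex C c) : (mapTensorLeft K).Additive where
  map_add := by intros; ext; exact MonoidalPreadditive.add_whiskerRight _ _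

lemma mapTensorLeft_map_smul {R : Type*} [Semiring R] [Linear R C] [MonoidalLinear R C]
    (K : HomologicalComplex C c) {X Y : C} (a : R) (f : X ⟶ Y) :
    (mapTensorLeft K).map (a • f) = a • (mapTensorLeft K).map f := by
  ext; exact MonoidalLinear.smul_whiskerRight _ _ _

end Monoidal

end HomologicalComplex

namespace CategoryTheory.ShortComplex.ShortExact

variable {C : Type*} [Category C] [Abelian C] {ι : Type*} {c : ComplexShape ι}
  {S : ShortComplex (HomologicalComplex C c)}

lemma isZero_homology_X₃_iff_mono (hS : S.ShortExact) {i j : ι} (hij : c.Rel i j)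
    (h₂ : IsZero (S.X₂.homology i)) :
    IsZero (S.X₃.homology i) ↔ Mono (HomologicalComplex.homologyMap S.f j) := by
  constructor
  · intro h₃
    exact (ShortComplex.exact_iff_mono _ (h₃.eq_of_src _ _)).1 (hS.homology_exact₁ i j hij)
  · intro hf
    have hδ : hS.δ i j hij = 0 := zero_of_comp_mono _ (hS.δ_comp i j hij)
    have := (ShortComplex.exact_iff_epi _ hδ).1 (hS.homology_exact₃ i j hij)
    exact IsZero.of_epi (HomologicalComplex.homologyMap S.g i) h₂

end CategoryTheory.ShortComplex.ShortExact

namespace ModuleCat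

open HomologicalComplex

variable {R : Type u} [CommRing R]

lemma mono_smul_id_iff (X : ModuleCat.{u} R) (a : R) : Mono (a • 𝟙 X) ↔ IsSMulRegular X a :=
  mono_iff_injective _

lemma shortExact_map_mapTensorLeft {ι : Type*} {c : ComplexShape ι}
    {K : HomologicalComplex (ModuleCat.{u} R) c} [∀ i, Module.Flat R (K.X i)]
    {S : ShortComplex (ModuleCat.{u} R)} (hS : S.ShortExact) :
    (S.map (mapTensorLeft K)).ShortExact := by
  refine shortExact_of_degreewise_shortExact _ fun i => ?_
  have hexact := (ShortComplex.ShortExact.moduleCat_exact_iff_function_exact S).1 hS.exact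
  refine ShortComplex.ShortExact.mk ?_ (mono_f := ?_) (epi_g := ?_)
  · rw [ShortComplex.ShortExact.moduleCat_exact_iff_function_exact]
    exact rTensor_exact (K.X i) hexact hS.moduleCat_surjective_g
  · rw [mono_iff_injective]
    exact Module.Flat.rTensor_preserves_injective_linearMap S.f.hom hS.moduleCat_injective_f
  · rw [epi_iff_surjective]
    exact LinearMap.rTensor_surjective (K.X i) hS.moduleCat_surjective_g

lemma _root_.HomologicalComplex.ExactAt.mapTensorLeft_obj {ι : Type*} {c : ComplexShape ι}
    {K : HomologicalComplex (ModuleCat.{u} R) c} {i : ι} (hK : K.ExactAt i)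
    (X : ModuleCat.{u} R) [Module.Flat R X] : ((mapTensorLeft K).obj X).ExactAt i := by
  rw [exactAt_iff, ShortComplex.ShortExact.moduleCat_exact_iff_function_exact] at hK ⊢
  exact Module.Flat.lTensor_exact X hK

instance {M : ModuleCat.{u} R} (P : ProjectiveResolution M) (i : ℕ) :
    Module.Flat R (P.complex.X i) :=
  have := P.projective i
  inferInstance

noncomputable def homologyZeroMapTensorLeftIso {M : ModuleCat.{u} R}
    (P : ProjectiveResolution M) (X : ModuleCat.{u} R) :
    ((mapTensorLeft P.complex).obj X).homology 0 ≅ X ⊗ M :=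
  (P.isoLeftDerivedObj _ 0).symm ≪≫ ((tensoringLeft _).obj X).leftDerivedZeroIsoSelf.app M

lemma isZero_Tor_one_of_flat (X M : ModuleCat.{u} R) [Module.Flat R X] :
    IsZero (((Tor (ModuleCat.{u} R) 1).obj X).obj M) := by
  let P : ProjectiveResolution M := CategoryTheory.projectiveResolution M
  exact (P.isoLeftDerivedObj _ 1).isZero_iff.2
    ((P.complex_exactAt_succ 0).mapTensorLeft_obj X).isZero_homology

lemma isZero_Tor_one_quotient_sup_iff {I : Ideal R} {a : R} (ha : IsSMulRegular (R ⧸ I) a)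
    (M : Type u) [AddCommGroup M] [Module R M]
    (hI : IsZero (((Tor (ModuleCat.{u} R) 1).obj (of R (R ⧸ I))).obj (of R M))) :
    IsZero (((Tor (ModuleCat.{u} R) 1).obj (of R (R ⧸ (I ⊔ Ideal.span {a})))).obj (of R M)) ↔
      IsSMulRegular (M ⧸ (I • ⊤ : Submodule R M)) a := by
  let P : ProjectiveResolution (of R M) := CategoryTheory.projectiveResolution (of R M)
  let T := mapTensorLeft P.complex
  have hS := shortExact_map_mapTensorLeft (K := P.complex)
    (IsSMulRegular.smulShortComplex_shortExact (M := of R (R ⧸ I)) ha)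
  calc _ ↔ IsZero ((T.obj (of R (QuotSMulTop a (R ⧸ I)))).homology 1) :=
        (P.isoLeftDerivedObj _ 1 ≪≫ (homologyFunctor _ _ 1).mapIso
          (T.mapIso (Ideal.quotSMulTopEquivQuotSup I a).toModuleIso.symm)).isZero_iff
    _ ↔ Mono (homologyMap (T.map (a • 𝟙 (of R (R ⧸ I)))) 0) :=
        hS.isZero_homology_X₃_iff_mono (by simp) ((P.isoLeftDerivedObj _ 1).isZero_iff.1 hI)
    _ ↔ IsSMulRegular ((T.obj (of R (R ⧸ I))).homology 0) a := by
        rw [mapTensorLeft_map_smul, CategoryTheory.Functor.map_id, homologyMap_smul,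
          homologyMap_id, mono_smul_id_iff]
    _ ↔ IsSMulRegular ((R ⧸ I) ⊗[R] M) a :=
        (homologyZeroMapTensorLeftIso P _).toLinearEquiv.isSMulRegular_congr a
    _ ↔ _ := (quotTensorEquivQuotSMul M I).isSMulRegular_congr a

end ModuleCat

/-- For a sequence `r₀, …, r_n` regular on `R`, the groups
`Tor₁^R(R/(r₀,…,r_k), M)` vanish for all `0 ≤ k ≤ n` if and only if
multiplication by `r_k` is injective on `M/(r₀,…,r_{k−1})M` for all `0 ≤ k ≤ n`. -/
theorem tor_vanishing_iff_regular_on_module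
    {R : Type u} [CommRing R] (n : ℕ) (r : ℕ → R)
    (hreg : ∀ k ≤ n, Ideal.Quotient.mk (Ideal.span (r '' Set.Iio k)) (r k) ∈
      nonZeroDivisors (R ⧸ Ideal.span (r '' Set.Iio k)))
    (M : Type u) [AddCommGroup M] [Module R M] :
    (∀ k ≤ n, Subsingleton (((Tor (ModuleCat.{u} R) 1).obj
        (ModuleCat.of R (R ⧸ Ideal.span (r '' Set.Iio (k + 1))))).obj (ModuleCat.of R M)))
      ↔ (∀ k ≤ n, Function.Injective fun m :
          M ⧸ (Ideal.span (r '' Set.Iio k) • ⊤ : Submodule R M) => r k • m) := by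
  simp_rw [← ModuleCat.isZero_iff_subsingleton]
  refine Nat.forall_le_succ_iff_of_step (p := fun k => IsZero (((Tor (ModuleCat.{u} R) 1).obj
    (ModuleCat.of R (R ⧸ Ideal.span (r '' Set.Iio k)))).obj (ModuleCat.of R M))) ?_ ?_
  · have : Module.Flat R (R ⧸ Ideal.span (r '' Set.Iio 0)) :=
      Module.Flat.of_linearEquiv (Submodule.quotEquivOfEqBot _ (by simp))
    exact ModuleCat.isZero_Tor_one_of_flat _ _
  · intro k hk hTor
    rw [Ideal.span_image_Iio_succ]
    exact ModuleCat.isZero_Tor_one_quotient_sup_iff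
      ((Ideal.Quotient.isSMulRegular_iff _ _).2 (hreg k hk)) M hTor
end

section
/- Let S be a commutative ring in which 2 is a nonzerodivisor, let ū ∈ S[[u]] be a power series with zero constant term satisfying ū ≡ −u mod (u²), and let σ : S[[u]] → S[[u]] be the S-algebra endomorphism given by substituting u ↦ ū; assume σ is an involution, i.e. σ(ū) = u. Then for a power series f ∈ S[[u]], one has σ(f) = f if and only if f lies in S[[w]], the image of the substitution homomorphism S[[t]] → S[[u]] sending t to w := u·ū. -/
/-!
Write `ū = u·v` with `v(0) = -1`, so that `w = u·ū = u²·v`. Since `σ(w) = ū·σ(ū) = ū·u = w`,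
`σ` fixes `S[[w]]` pointwise. Conversely, `σ` multiplies the lowest coefficient of a series of
order `m` by `(-1)^m`, so when `2` is a nonzerodivisor a fixed series never has odd order.
A fixed `f` is therefore expanded greedily in powers of `w`: subtracting a multiple of `w^n`
kills the coefficient of `u^(2n)`, the remainder is still fixed, and so its coefficient of
`u^(2n+1)` vanishes as well.
-/

open PowerSeries

/-- Substitution of the power series `w` (with zero constant term) into the power
series `f`: the coefficient of `u^n` in `f(w)` is `∑_{k ≤ n} f_k · (w^k)_n`,
which is the usual composition of formal power series. -/
noncomputable def PowerSeries.substInto {S : Type*} [CommRing S] (w f : PowerSeries S) :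
    PowerSeries S :=
  PowerSeries.mk fun n =>
    ∑ k ∈ Finset.range (n + 1), PowerSeries.coeff k f * PowerSeries.coeff n (w ^ k)

namespace PowerSeries

variable {S : Type*} [CommRing S]

theorem coeff_pow_eq_zero_of_lt {w : S⟦X⟧} (hw : constantCoeff w = 0) {n k : ℕ} (h : n < k) :
    coeff n (w ^ k) = 0 :=
  X_pow_dvd_iff.mp (pow_dvd_pow_of_dvd (X_dvd_iff.mpr hw) k) n h

theorem coeff_subst_eq_sum_range {w : S⟦X⟧} (hw : constantCoeff w = 0) (f : S⟦X⟧) (n : ℕ) :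
    coeff n (subst w f) = ∑ k ∈ Finset.range (n + 1), coeff k f * coeff n (w ^ k) := by
  rw [coeff_subst' (HasSubst.of_constantCoeff_zero' hw), finsum_eq_sum_of_support_subset]
  · rfl
  · intro k hk
    by_contra hkn
    simp only [Finset.coe_range, Set.mem_Iio, not_lt] at hkn
    exact hk (smul_eq_zero_of_right _ (coeff_pow_eq_zero_of_lt hw hkn))

theorem substInto_eq_subst {w : S⟦X⟧} (hw : constantCoeff w = 0) (f : S⟦X⟧) :
    substInto w f = subst w f := by
  ext n
  rw [substInto, coeff_mk, coeff_subst_eq_sum_range hw]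

theorem exists_eq_X_mul_of_add_X_mem_span {a : S⟦X⟧} (ha : a + X ∈ Ideal.span {(X : S⟦X⟧) ^ 2}) :
    ∃ v, a = X * v ∧ constantCoeff v = -1 := by
  obtain ⟨t, ht⟩ := Ideal.mem_span_singleton'.mp ha
  exact ⟨X * t - 1, by linear_combination -ht, by simp⟩

theorem X_pow_succ_dvd_of_coeff_eq_zero {f : S⟦X⟧} {m : ℕ} (hm : X ^ m ∣ f)
    (hf : coeff m f = 0) : X ^ (m + 1) ∣ f :=
  X_pow_dvd_iff.mpr fun k hk => (Nat.lt_succ_iff_lt_or_eq.mp hk).elim (X_pow_dvd_iff.mp hm k)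
    fun hkm => hkm ▸ hf

theorem coeff_subst_X_mul_of_X_pow_dvd (v : S⟦X⟧) {f : S⟦X⟧} {m : ℕ} (hf : X ^ m ∣ f) :
    coeff m (subst (X * v) f) = constantCoeff v ^ m * coeff m f := by
  rw [coeff_subst_eq_sum_range (by simp), Finset.sum_range_succ,
    Finset.sum_eq_zero fun k hk => by rw [X_pow_dvd_iff.mp hf k (Finset.mem_range.mp hk), zero_mul],
    zero_add, mul_comm, mul_pow]
  congr 1
  simpa using coeff_X_pow_mul (v ^ m) m 0

theorem X_pow_succ_dvd_of_subst_eq_self {v f : S⟦X⟧} (hv : constantCoeff v = -1)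
    (h2 : (2 : S) ∈ nonZeroDivisors S) (hf : subst (X * v) f = f) {m : ℕ} (hm : Odd m)
    (hdvd : X ^ m ∣ f) : X ^ (m + 1) ∣ f := by
  refine X_pow_succ_dvd_of_coeff_eq_zero hdvd ((mem_nonZeroDivisors_iff.mp h2).1 _ ?_)
  have h := coeff_subst_X_mul_of_X_pow_dvd v hdvd
  rw [hf, hv, hm.neg_one_pow] at h
  linear_combination h

/-- The digits are normalised for `w = -X^2 + O(X^3)`: the `n`-th one cancels the coefficient
of `X^(2n)` in the `n`-th remainder. -/
noncomputable def evenExpansionRemainder (w f : S⟦X⟧) : ℕ → S⟦X⟧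
  | 0 => f
  | n + 1 => evenExpansionRemainder w f n -
      C ((-1) ^ n * coeff (2 * n) (evenExpansionRemainder w f n)) * w ^ n

noncomputable def evenExpansion (w f : S⟦X⟧) : S⟦X⟧ :=
  mk fun n => (-1) ^ n * coeff (2 * n) (evenExpansionRemainder w f n)

theorem evenExpansionRemainder_succ (w f : S⟦X⟧) (n : ℕ) :
    evenExpansionRemainder w f (n + 1) =
      evenExpansionRemainder w f n - C (coeff n (evenExpansion w f)) * w ^ n := by
  rw [evenExpansion, coeff_mk, evenExpansionRemainder]

theorem evenExpansionRemainder_eq_sub_sum (w f : S⟦X⟧) (n : ℕ) :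
    evenExpansionRemainder w f n =
      f - ∑ k ∈ Finset.range n, C (coeff k (evenExpansion w f)) * w ^ k := by
  induction n with
  | zero => simp [evenExpansionRemainder]
  | succ n ih => rw [evenExpansionRemainder_succ, ih, Finset.sum_range_succ, sub_add_eq_sub_sub]

theorem subst_evenExpansion {w f : S⟦X⟧} (hw : constantCoeff w = 0)
    (hrem : ∀ n, X ^ (2 * n) ∣ evenExpansionRemainder w f n) :
    subst w (evenExpansion w f) = f := by
  ext m
  have h := X_pow_dvd_iff.mp (hrem (m + 1)) m (by omega)
  rw [evenExpansionRemainder_eq_sub_sum, map_sub, map_sum, sub_eq_zero] at h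
  simp only [h, coeff_subst_eq_sum_range hw, coeff_C_mul]

theorem subst_evenExpansionRemainder {a w f : S⟦X⟧} (ha : HasSubst a) (hw : subst a w = w)
    (hf : subst a f = f) (n : ℕ) :
    subst a (evenExpansionRemainder w f n) = evenExpansionRemainder w f n := by
  induction n with
  | zero => exact hf
  | succ n ih =>
    rw [evenExpansionRemainder_succ, ← coe_substAlgHom ha, map_sub, map_mul, map_pow,
      coe_substAlgHom, ih, hw, subst_C]
    rfl

theorem X_pow_dvd_evenExpansionRemainder {v f : S⟦X⟧} (hv : constantCoeff v = -1)
    (h2 : (2 : S) ∈ nonZeroDivisors S) (hf : subst (X * v) f = f)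
    (hw : subst (X * v) (X * (X * v)) = X * (X * v)) (n : ℕ) :
    X ^ (2 * n) ∣ evenExpansionRemainder (X * (X * v)) f n := by
  induction n with
  | zero => simp
  | succ n ih =>
    have hpow : (X * (X * v)) ^ n = X ^ (2 * n) * v ^ n := by ring
    have hdvd : X ^ (2 * n) ∣ evenExpansionRemainder (X * (X * v)) f (n + 1) := by
      rw [evenExpansionRemainder_succ, hpow]
      exact dvd_sub ih (dvd_mul_of_dvd_right (dvd_mul_right _ _) _)
    have hcoeff : coeff (2 * n) (evenExpansionRemainder (X * (X * v)) f (n + 1)) = 0 := by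
      have hlead : coeff (2 * n) (X ^ (2 * n) * v ^ n) = (-1) ^ n := by
        simpa [hv] using coeff_X_pow_mul (v ^ n) (2 * n) 0
      have hsq : (-1 : S) ^ n * (-1) ^ n = 1 := by rw [← mul_pow]; simp
      rw [evenExpansionRemainder_succ, map_sub, coeff_C_mul, hpow, hlead, evenExpansion, coeff_mk]
      linear_combination (-coeff (2 * n) (evenExpansionRemainder (X * (X * v)) f n)) * hsq
    exact X_pow_succ_dvd_of_subst_eq_self hv h2
      (subst_evenExpansionRemainder (HasSubst.of_constantCoeff_zero' (by simp)) hw hf _)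
      (odd_two_mul_add_one n) (X_pow_succ_dvd_of_coeff_eq_zero hdvd hcoeff)

end PowerSeries

theorem fixed_points_of_conjugation_eq_image_of_uubar_general
    {S : Type*} [CommRing S] (h2 : (2 : S) ∈ nonZeroDivisors S)
    (ubar : PowerSeries S)
    (hcong : ubar + PowerSeries.X ∈ Ideal.span {(PowerSeries.X : PowerSeries S) ^ 2})
    (hinv : PowerSeries.substInto ubar ubar = PowerSeries.X)
    (f : PowerSeries S) :
    PowerSeries.substInto ubar f = f ↔
      ∃ g : PowerSeries S, PowerSeries.substInto (PowerSeries.X * ubar) g = f := by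
  obtain ⟨v, rfl, hv⟩ := exists_eq_X_mul_of_add_X_mem_span hcong
  have hu : HasSubst (X * v) := HasSubst.of_constantCoeff_zero' (by simp)
  have hw : HasSubst (X * (X * v)) := HasSubst.of_constantCoeff_zero' (by simp)
  simp only [substInto_eq_subst (by simp : constantCoeff (X * v) = 0),
    substInto_eq_subst (by simp : constantCoeff (X * (X * v)) = 0)] at hinv ⊢
  have hσw : subst (X * v) (X * (X * v)) = X * (X * v) := by
    rw [subst_mul hu, subst_X hu, hinv, mul_comm]
  constructor
  · intro hf
    exact ⟨_, subst_evenExpansion (by simp) (X_pow_dvd_evenExpansionRemainder hv h2 hf hσw)⟩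
  · rintro ⟨g, rfl⟩
    rw [subst_comp_subst_apply hw hu, hσw]

/-- The fixed ring of the involution `σ : f(u) ↦ f(ū)` is exactly the image
`S[[w]]` of `S[[t]] → S[[u]]`, `t ↦ w := u·ū`. -/
theorem fixed_points_of_conjugation_eq_image_of_uubar
    {S : Type*} [CommRing S] (h2 : (2 : S) ∈ nonZeroDivisors S)
    (ubar : PowerSeries S) (h0 : PowerSeries.constantCoeff ubar = 0)
    (hcong : ubar + PowerSeries.X ∈ Ideal.span {(PowerSeries.X : PowerSeries S) ^ 2})
    (hinv : PowerSeries.substInto ubar ubar = PowerSeries.X)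
    (f : PowerSeries S) :
    PowerSeries.substInto ubar f = f ↔
      ∃ g : PowerSeries S, PowerSeries.substInto (PowerSeries.X * ubar) g = f :=
  fixed_points_of_conjugation_eq_image_of_uubar_general h2 ubar hcong hinv f
end

section
/- Let S be a commutative ring and let w ∈ S[[u]] be a power series with w ≡ c·u² mod (u³) for some unit c of S. Then S[[u]] is a free module over the subring S[[w]] (the image of the substitution homomorphism S[[t]] → S[[u]] sending t to w) with basis {1, u}; equivalently, every f ∈ S[[u]] can be written uniquely as f = g(w) + u·h(w) for power series g, h ∈ S[[t]]. -/
open PowerSeries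

/-!
Order the family `w^m, X·w^m` by `w^m ↦ 2m`, `X·w^m ↦ 2m + 1`. Since `w = c X² + O(X³)` with
`c` a unit, the `j`-th member has order exactly `j` and unit leading coefficient. Comparing
coefficients, `f = g(w) + X·h(w)` becomes a lower triangular system for the interleaved
coefficients of `g` and `h` with unit diagonal, which has exactly one solution.
-/

open Finset
open Equiv (natSumNatEquivNat)

section Triangular

variable {R : Type*} [Ring R]

noncomputable def triangularSolve (E : ℕ → ℕ → R) (y : ℕ → R) : ℕ → R
  | n => (y n - ∑ j ∈ (range n).attach, triangularSolve E y j * E j n) * Ring.inverse (E n n)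
decreasing_by exact mem_range.mp j.2

theorem triangularSolve_eq (E : ℕ → ℕ → R) (y : ℕ → R) (n : ℕ) :
    triangularSolve E y n =
      (y n - ∑ j ∈ range n, triangularSolve E y j * E j n) * Ring.inverse (E n n) := by
  rw [triangularSolve, sum_attach (range n) fun j => triangularSolve E y j * E j n]

theorem existsUnique_sum_range_mul_eq {E : ℕ → ℕ → R} (hE : ∀ n, IsUnit (E n n)) (y : ℕ → R) :
    ∃! a : ℕ → R, ∀ n, ∑ j ∈ range (n + 1), a j * E j n = y n := by
  refine ⟨triangularSolve E y, fun n => ?_, fun a ha => funext fun n => ?_⟩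
  · rw [sum_range_succ, triangularSolve_eq E y n, Ring.inverse_mul_cancel_right _ _ (hE n),
      add_sub_cancel]
  · induction n using Nat.strong_induction_on with
    | _ n ih =>
      have hprev : ∑ j ∈ range n, a j * E j n = ∑ j ∈ range n, triangularSolve E y j * E j n :=
        sum_congr rfl fun j hj => by rw [ih j (mem_range.mp hj)]
      rw [triangularSolve_eq, ← hprev, ← ha n, sum_range_succ, add_sub_cancel_left,
        Ring.mul_inverse_cancel_right _ _ (hE n)]

end Triangular

namespace PowerSeries

variable {S : Type*} [CommRing S]

theorem coeff_substInto_eq_sum {w : S⟦X⟧} (hw : X ∣ w) (g : S⟦X⟧) {n N : ℕ} (hn : n < N) :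
    coeff n (substInto w g) = ∑ k ∈ range N, coeff k g * coeff n (w ^ k) := by
  rw [substInto, coeff_mk]
  refine sum_subset (range_subset_range.2 hn) fun k _ hk => ?_
  rw [X_pow_dvd_iff.mp (pow_dvd_pow_of_dvd hw k) n (by simp at hk; omega), mul_zero]

theorem coeff_X_mul_substInto_eq_sum {w : S⟦X⟧} (hw : X ∣ w) (h : S⟦X⟧) {n N : ℕ}
    (hn : n < N) :
    coeff n (X * substInto w h) = ∑ k ∈ range N, coeff k h * coeff n (X * w ^ k) := by
  cases n with
  | zero => simp
  | succ n =>
    simp only [coeff_succ_X_mul]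
    exact coeff_substInto_eq_sum hw h (by omega)

noncomputable def powOrXMulPow (w : S⟦X⟧) : ℕ ⊕ ℕ → S⟦X⟧ :=
  Sum.elim (w ^ ·) (X * w ^ ·)

theorem X_pow_dvd_powOrXMulPow {w : S⟦X⟧} (hw : X ^ 2 ∣ w) (j : ℕ) :
    X ^ j ∣ powOrXMulPow w (natSumNatEquivNat.symm j) := by
  have hpow (m : ℕ) : (X : S⟦X⟧) ^ (2 * m) ∣ w ^ m := by
    rw [pow_mul]; exact pow_dvd_pow_of_dvd hw m
  obtain ⟨x, rfl⟩ := natSumNatEquivNat.surjective j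
  rw [Equiv.symm_apply_apply]
  cases x with
  | inl m => exact hpow m
  | inr m => exact pow_succ' (X : S⟦X⟧) (2 * m) ▸ mul_dvd_mul_left X (hpow m)

theorem isUnit_coeff_powOrXMulPow {v : S⟦X⟧} (hv : IsUnit (constantCoeff v)) (j : ℕ) :
    IsUnit (coeff j (powOrXMulPow (X ^ 2 * v) (natSumNatEquivNat.symm j))) := by
  obtain ⟨x, rfl⟩ := natSumNatEquivNat.surjective j
  rw [Equiv.symm_apply_apply]
  cases x with
  | inl m => simpa [powOrXMulPow, mul_pow, ← pow_mul, coeff_X_pow_mul'] using hv.pow m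
  | inr m => simpa [powOrXMulPow, mul_pow, ← pow_mul, ← mul_assoc, ← pow_succ',
      coeff_X_pow_mul'] using hv.pow m

noncomputable def coeffEquiv : S⟦X⟧ ≃ (ℕ → S) where
  toFun f n := coeff n f
  invFun := mk
  left_inv f := by ext; simp
  right_inv a := by funext; simp

noncomputable def interleaveEquiv : S⟦X⟧ × S⟦X⟧ ≃ (ℕ → S) :=
  ((coeffEquiv.prodCongr coeffEquiv).trans (Equiv.sumArrowEquivProdArrow ℕ ℕ S).symm).trans
    (natSumNatEquivNat.arrowCongr (Equiv.refl S))

theorem coeff_substInto_add_X_mul_substInto {w : S⟦X⟧} (hw : X ^ 2 ∣ w) (gh : S⟦X⟧ × S⟦X⟧)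
    (n : ℕ) :
    coeff n (substInto w gh.1 + X * substInto w gh.2) =
      ∑ j ∈ range (n + 1), interleaveEquiv gh j *
        coeff n (powOrXMulPow w (natSumNatEquivNat.symm j)) := by
  set K : ℕ ⊕ ℕ → S := fun x =>
    Sum.elim (coeff · gh.1) (coeff · gh.2) x * coeff n (powOrXMulPow w x)
  have hX : X ∣ w := (dvd_pow_self X two_ne_zero).trans hw
  calc coeff n (substInto w gh.1 + X * substInto w gh.2)
      = ∑ m ∈ range (n + 1), coeff m gh.1 * coeff n (w ^ m) +
          ∑ m ∈ range (n + 1), coeff m gh.2 * coeff n (X * w ^ m) := by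
        rw [map_add, coeff_substInto_eq_sum hX _ n.lt_succ_self,
          coeff_X_mul_substInto_eq_sum hX _ n.lt_succ_self]
    _ = ∑ x ∈ (range (n + 1)).disjSum (range (n + 1)), K x := by
        rw [sum_disjSum]; rfl
    _ = ∑ j ∈ range (2 * (n + 1)), K (natSumNatEquivNat.symm j) :=
        sum_equiv natSumNatEquivNat (fun x => by cases x <;> simp; omega)
          (fun x _ => by rw [Equiv.symm_apply_apply])
    _ = ∑ j ∈ range (n + 1), K (natSumNatEquivNat.symm j) := by
        refine (sum_subset (range_subset_range.2 (by omega)) fun j _ hj => ?_).symm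
        exact mul_eq_zero_of_right _
          (X_pow_dvd_iff.mp (X_pow_dvd_powOrXMulPow hw j) n (by simpa using hj))

end PowerSeries

/-- If `w ≡ c·u² mod (u³)` with `c` a unit, then every `f ∈ S[[u]]` has a unique
expression `f = g(w) + u·h(w)`; i.e. `S[[u]]` is free with basis `{1, u}` over the
image `S[[w]]` of `S[[t]] → S[[u]]`, `t ↦ w`. -/
theorem free_basis_one_u_over_Sw
    {S : Type*} [CommRing S] (c : S) (hc : IsUnit c) (w : PowerSeries S)
    (hw : w - PowerSeries.C c * PowerSeries.X ^ 2 ∈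
      Ideal.span {(PowerSeries.X : PowerSeries S) ^ 3})
    (f : PowerSeries S) :
    ∃! gh : PowerSeries S × PowerSeries S,
      f = PowerSeries.substInto w gh.1 + PowerSeries.X * PowerSeries.substInto w gh.2 := by
  obtain ⟨r, hr⟩ := Ideal.mem_span_singleton.mp hw
  obtain rfl : w = X ^ 2 * (C c + X * r) := by linear_combination hr
  have hdiag := isUnit_coeff_powOrXMulPow (v := C c + X * r) (by simpa using hc)
  refine (interleaveEquiv.existsUnique_congr fun gh => ?_).mpr <|
    existsUnique_sum_range_mul_eq
      (E := fun j n => coeff n (powOrXMulPow _ (natSumNatEquivNat.symm j))) hdiag (coeff · f)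
  simp only [PowerSeries.ext_iff, coeff_substInto_add_X_mul_substInto (dvd_mul_right _ _), eq_comm]
end

section
/- Let R be a commutative ring, let v₀, …, v_n ∈ R, and let f ∈ R[[w]] be a formal power series. For 0 ≤ k ≤ n+1 write I_k for the ideal of R generated by v₀,…,v_{k−1} (with I₀ = 0). Assume that for each 0 ≤ k ≤ n: (i) the image of v_k in R/I_k is a nonzerodivisor, and (ii) the image of f in (R/I_{k+1})[[w]] is a nonzerodivisor. Then (v₀, …, v_n) is a regular sequence on the R[[w]]-module R[[w]]/(f): that is, for each 0 ≤ k ≤ n, multiplication by v_k is injective on the quotient R[[w]]/(f, v₀, …, v_{k−1}), where (f, v₀, …, v_{k−1}) denotes the ideal of R[[w]] generated by f and v₀,…,v_{k−1}. -/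
/-!
For a finitely generated ideal `I ⊆ R`, the kernel of `R⟦X⟧ → (R ⧸ I)⟦X⟧` is `I·R⟦X⟧`.
Hence the hypotheses say that `C v_k` is regular modulo `I_k·R⟦X⟧` and that `f` is regular
modulo `I_{k+1}·R⟦X⟧ = I_k·R⟦X⟧ + (C v_k)`. The theorem then follows from an elementary swap:
if `a` is regular on `S ⧸ I` and `f` is regular on `S ⧸ (I + (a))`, then `a` is regular on
`S ⧸ (I + (f))`.
-/

open PowerSeries

namespace PowerSeries

variable {R : Type*} [CommRing R]

theorem map_mk_eq_zero_iff {I : Ideal R} {p : R⟦X⟧} :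
    map (Ideal.Quotient.mk I) p = 0 ↔ ∀ m, coeff m p ∈ I := by
  simp only [PowerSeries.ext_iff, coeff_map, map_zero, Ideal.Quotient.eq_zero_iff_mem]

-- Finite generation is what lets the coefficientwise combinations be summed.
theorem mem_map_C_of_forall_coeff_mem {I : Ideal R} (hI : I.FG) {p : R⟦X⟧}
    (hp : ∀ m, coeff m p ∈ I) : p ∈ I.map C := by
  obtain ⟨s, rfl⟩ := hI
  choose c hc using fun m => Submodule.mem_span_finset'.1 (hp m)
  have hsum : p = ∑ a : s, mk (fun m => c m a) * C (a : R) := by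
    ext m
    simp only [map_sum, coeff_mul_C, coeff_mk, ← hc m, smul_eq_mul]
  rw [hsum]
  exact Ideal.sum_mem _ fun a _ =>
    Ideal.mul_mem_left _ _ (Ideal.mem_map_of_mem _ (Ideal.subset_span a.2))

theorem ker_map_mk {I : Ideal R} (hI : I.FG) :
    RingHom.ker (map (Ideal.Quotient.mk I)) = I.map C := by
  refine le_antisymm (fun p hp => mem_map_C_of_forall_coeff_mem hI (map_mk_eq_zero_iff.1 hp)) ?_
  rw [Ideal.map_le_iff_le_comap]
  intro a ha
  simp [Ideal.Quotient.eq_zero_iff_mem.2 ha]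

theorem C_mem_nonZeroDivisors {a : R} (ha : a ∈ nonZeroDivisors R) :
    C a ∈ nonZeroDivisors R⟦X⟧ :=
  MvPowerSeries.mem_nonZeroDivisors_of_constantCoeff (by convert ha; exact constantCoeff_C a)

theorem mem_map_C_of_mul_mem {I : Ideal R} (hI : I.FG) {f z : R⟦X⟧}
    (hf : map (Ideal.Quotient.mk I) f ∈ nonZeroDivisors (R ⧸ I)⟦X⟧)
    (hfz : f * z ∈ I.map C) :
    z ∈ I.map C := by
  rw [← ker_map_mk hI, RingHom.mem_ker] at hfz ⊢
  rw [map_mul] at hfz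
  exact mem_nonZeroDivisors_iff_left.1 hf _ hfz

end PowerSeries

theorem Ideal.mem_sup_span_singleton_of_mul_mem {S : Type*} [CommRing S] {I : Ideal S}
    {a f y : S}
    (ha : ∀ x, a * x ∈ I → x ∈ I)
    (hf : ∀ z, f * z ∈ I ⊔ span {a} → z ∈ I ⊔ span {a})
    (hy : a * y ∈ I ⊔ span {f}) : y ∈ I ⊔ span {f} := by
  obtain ⟨m, hm, _, hz, hmz⟩ := Submodule.mem_sup.1 hy
  obtain ⟨z, rfl⟩ := mem_span_singleton'.1 hz
  obtain ⟨m', hm', _, hh, rfl⟩ := Submodule.mem_sup.1 <| hf z <| by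
    have : f * z = a * y - m := by rw [← hmz]; ring
    rw [this]
    exact sub_mem (mem_sup_right (mem_span_singleton'.2 ⟨y, mul_comm _ _⟩)) (mem_sup_left hm)
  obtain ⟨h, rfl⟩ := mem_span_singleton'.1 hh
  have : y - h * f ∈ I := ha _ <| by
    have : a * (y - h * f) = m + f * m' := by linear_combination -hmz
    rw [this]
    exact add_mem hm (mul_mem_left _ _ hm')
  simpa using add_mem (mem_sup_left this) (mem_sup_right (mem_span_singleton'.2 ⟨h, rfl⟩) :
    h * f ∈ I ⊔ span {f})

/-- If `(v₀, …, v_n)` is a regular sequence on `R` and the image of `f` in each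
`(R/(v₀,…,v_k))[[w]]` is a nonzerodivisor, then `(v₀, …, v_n)` is a regular
sequence on `R[[w]]/(f)`. -/
theorem regular_sequence_on_powerSeries_quotient
    {R : Type*} [CommRing R] (n : ℕ) (v : ℕ → R) (f : PowerSeries R)
    (hreg : ∀ k ≤ n, Ideal.Quotient.mk (Ideal.span (v '' Set.Iio k)) (v k) ∈
      nonZeroDivisors (R ⧸ Ideal.span (v '' Set.Iio k)))
    (hf : ∀ k ≤ n, PowerSeries.map (Ideal.Quotient.mk (Ideal.span (v '' Set.Iio (k + 1)))) f ∈
      nonZeroDivisors (PowerSeries (R ⧸ Ideal.span (v '' Set.Iio (k + 1))))) :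
    ∀ k ≤ n, Function.Injective fun y :
        PowerSeries R ⧸ Ideal.span (insert f ((fun i => PowerSeries.C (R := R) (v i)) '' Set.Iio k)) =>
      Ideal.Quotient.mk (Ideal.span (insert f ((fun i => PowerSeries.C (R := R) (v i)) '' Set.Iio k)))
        (PowerSeries.C (R := R) (v k)) * y := by
  intro k hk
  have hfg : ∀ j, (Ideal.span (v '' Set.Iio j)).FG := fun j =>
    Submodule.fg_span ((Set.finite_Iio j).image v)
  set I := Ideal.span (v '' Set.Iio k)
  have hJ :
      Ideal.span (insert f ((fun i => C (v i)) '' Set.Iio k)) = I.map C ⊔ Ideal.span {f} := by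
    rw [Ideal.span_insert, Ideal.map_span, Set.image_image, sup_comm]
  have hI_succ : (Ideal.span (v '' Set.Iio (k + 1))).map C = I.map C ⊔ Ideal.span {C (v k)} := by
    rw [← Order.succ_eq_add_one, Order.Iio_succ_eq_insert, Set.image_insert_eq, Ideal.span_insert,
      Ideal.map_sup, Ideal.map_span, Set.image_singleton, sup_comm]
  have hvk : ∀ x, C (v k) * x ∈ I.map C → x ∈ I.map C := fun x =>
    mem_map_C_of_mul_mem (hfg k) (by simpa using C_mem_nonZeroDivisors (hreg k hk))
  have hfk : ∀ z, f * z ∈ I.map C ⊔ Ideal.span {C (v k)} →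
      z ∈ I.map C ⊔ Ideal.span {C (v k)} := by
    simpa only [← hI_succ] using fun z => mem_map_C_of_mul_mem (hfg (k + 1)) (hf k hk)
  rw [hJ]
  -- `C (v k) • y` and `mk (C (v k)) * y` agree definitionally on the quotient ring.
  exact (isSMulRegular_quotient_iff_mem_of_smul_mem _ _).2 fun y hy =>
    Ideal.mem_sup_span_singleton_of_mul_mem hvk hfk hy
end

section
/- Let S be a commutative ring in which 2 is a nonzerodivisor, let ū ∈ S[[u]] be a power series with zero constant term satisfying ū ≡ −u mod (u²), and let σ : S[[u]] → S[[u]] be the S-algebra endomorphism given by substituting u ↦ ū; assume σ is an involution, i.e. σ(ū) = u. Let S[[w]] denote the image of the substitution homomorphism S[[t]] → S[[u]] sending t to w := u·ū, and let ξ ∈ S[[t]] be the unique power series with ξ(u·ū) = u + ū. Then the set {g + σ(g) : g ∈ S[[u]]} equals the ideal of the ring S[[w]] generated by 2 and ξ(w); consequently the quotient of the fixed subring {f ∈ S[[u]] : σ(f) = f} = S[[w]] by this set of norms is isomorphic to S[[t]]/(2, ξ(t)). -/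
/-!
Put `w = u·ū`. The congruence `ū ≡ -u` makes `ū = u·V` with `V` a unit, so `w = u²·V`. Dividing
repeatedly by `w` writes every `f ∈ S[[u]]` as `a(w) + u·b(w)`, and substituting `w` is injective
because `w` is a non-zero-divisor with zero constant term. Since `σ` is an involution it fixes `w`,
hence `σ(a(w) + u·b(w)) = a(w) + ū·b(w)` and the norm of `a(w) + u·b(w)` is `2a(w) + ξ(w)·b(w)`.
Injectivity then identifies the preimage of the norms with the ideal `(2, ξ)`.
-/

open PowerSeries

namespace PowerSeries

variable {S : Type*} [CommRing S]

theorem subst_eq_mul_add_C {w : S⟦X⟧} (hw : constantCoeff w = 0) (f : S⟦X⟧) :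
    (subst w f : S⟦X⟧) = w * subst w (mk fun p ↦ coeff (p + 1) f) + C (constantCoeff f) := by
  have hsubst := HasSubst.of_constantCoeff_zero' hw
  conv_lhs => rw [eq_X_mul_shift_add_const f]
  rw [subst_add hsubst, subst_mul hsubst, subst_X hsubst, subst_C]
  rfl

theorem subst_injective_of_mem_nonZeroDivisors {w : S⟦X⟧} (hw : constantCoeff w = 0)
    (hw' : w ∈ nonZeroDivisors S⟦X⟧) :
    Function.Injective (subst w : S⟦X⟧ → S⟦X⟧) := by
  have peel : ∀ f : S⟦X⟧, subst w f = (0 : S⟦X⟧) →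
      constantCoeff f = 0 ∧ subst w (mk fun p ↦ coeff (p + 1) f) = (0 : S⟦X⟧) := by
    intro f hf
    rw [subst_eq_mul_add_C hw] at hf
    have hc : constantCoeff f = 0 := by simpa [hw] using congrArg constantCoeff hf
    rw [hc, map_zero, add_zero] at hf
    exact ⟨hc, (mem_nonZeroDivisors_iff_right.mp hw') _ (by rwa [mul_comm] at hf)⟩
  suffices h : ∀ n (f : S⟦X⟧), subst w f = (0 : S⟦X⟧) → coeff n f = 0 by
    rw [← coe_substAlgHom (HasSubst.of_constantCoeff_zero' hw), injective_iff_map_eq_zero]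
    exact fun f hf => ext fun n => by simpa using h n f (by rwa [coe_substAlgHom] at hf)
  intro n
  induction n with
  | zero => exact fun f hf => by simpa using (peel f hf).1
  | succ n ih => exact fun f hf => by simpa using ih _ (peel f hf).2

theorem eq_zero_of_forall_X_pow_dvd {f : S⟦X⟧} (h : ∀ n, X ^ n ∣ f) : f = 0 :=
  ext fun n => by simpa using X_pow_dvd_iff.mp (h (n + 1)) n (Nat.lt_succ_self n)

theorem exists_eq_C_add_C_mul_X_add_X_sq_mul (f : S⟦X⟧) :
    ∃ q, f = C (coeff 0 f) + C (coeff 1 f) * X + X ^ 2 * q := by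
  have : X ^ 2 ∣ f - (C (coeff 0 f) + C (coeff 1 f) * X) := by
    refine X_pow_dvd_iff.mpr fun m hm => ?_
    interval_cases m <;> simp
  obtain ⟨q, hq⟩ := this
  exact ⟨q, by rw [← hq]; ring⟩

theorem exists_eq_subst_add_X_mul_subst (U : S⟦X⟧ˣ) (f : S⟦X⟧) :
    ∃ a b : S⟦X⟧,
      f = (subst (X ^ 2 * (U : S⟦X⟧)) a : S⟦X⟧) + X * subst (X ^ 2 * (U : S⟦X⟧)) b := by
  set W : S⟦X⟧ := X ^ 2 * (U : S⟦X⟧)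
  have hW : constantCoeff W = 0 := by simp [W]
  obtain ⟨step, hstep⟩ : ∃ step : S⟦X⟧ → S⟦X⟧,
      ∀ g, g = C (coeff 0 g) + C (coeff 1 g) * X + W * step g := by
    choose q hq using exists_eq_C_add_C_mul_X_add_X_sq_mul (S := S)
    refine ⟨fun g => ↑U⁻¹ * q g, fun g => ?_⟩
    rw [mul_assoc, U.mul_inv_cancel_left, ← hq]
  let A : S⟦X⟧ → S⟦X⟧ := fun g => mk fun k => coeff 0 (step^[k] g)
  let B : S⟦X⟧ → S⟦X⟧ := fun g => mk fun k => coeff 1 (step^[k] g)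
  have hA : ∀ g, (subst W (A g) : S⟦X⟧) = W * subst W (A (step g)) + C (coeff 0 g) := by
    intro g
    rw [subst_eq_mul_add_C hW]
    simp [A, Function.iterate_succ_apply]
  have hB : ∀ g, (subst W (B g) : S⟦X⟧) = W * subst W (B (step g)) + C (coeff 1 g) := by
    intro g
    rw [subst_eq_mul_add_C hW]
    simp [B, Function.iterate_succ_apply]
  let E : S⟦X⟧ → S⟦X⟧ := fun g => g - subst W (A g) - X * subst W (B g)
  have hE : ∀ g, E g = W * E (step g) := fun g => by
    simp only [E]
    rw [hA, hB]
    linear_combination hstep g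
  have hdvd : ∀ n g, X ^ n ∣ E g := by
    intro n
    induction n with
    | zero => simp
    | succ n ih =>
      intro g
      rw [hE, pow_succ']
      exact mul_dvd_mul (dvd_mul_of_dvd_left (dvd_pow_self X two_ne_zero) _) (ih _)
  refine ⟨A f, B f, ?_⟩
  simpa [E, sub_sub, sub_eq_zero] using eq_zero_of_forall_X_pow_dvd (hdvd · f)

theorem exists_eq_X_mul_unit_of_add_X_mem_span_X_sq {f : S⟦X⟧}
    (hf : f + X ∈ Ideal.span {(X : S⟦X⟧) ^ 2}) : ∃ V : S⟦X⟧ˣ, f = X * (V : S⟦X⟧) := by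
  obtain ⟨q, hq⟩ := Ideal.mem_span_singleton'.mp hf
  have hV : IsUnit (X * q - 1) := isUnit_iff_constantCoeff.mpr (by simp)
  exact ⟨hV.unit, by rw [IsUnit.unit_spec]; linear_combination -hq⟩

section Involution

variable {u : S⟦X⟧}

theorem subst_X_mul_self (hu : constantCoeff u = 0) (hinv : subst u u = (X : S⟦X⟧)) :
    (subst u (X * u) : S⟦X⟧) = X * u := by
  have hsubst := HasSubst.of_constantCoeff_zero' hu
  rw [subst_mul hsubst, subst_X hsubst, hinv, mul_comm]

theorem subst_subst_X_mul_self (hu : constantCoeff u = 0) (hinv : subst u u = (X : S⟦X⟧))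
    (a : S⟦X⟧) : (subst u (subst (X * u) a : S⟦X⟧) : S⟦X⟧) = subst (X * u) a := by
  rw [subst_comp_subst_apply (HasSubst.of_constantCoeff_zero' (by simp))
    (HasSubst.of_constantCoeff_zero' hu), subst_X_mul_self hu hinv]

theorem subst_add_X_mul_subst_add_subst (hu : constantCoeff u = 0)
    (hinv : subst u u = (X : S⟦X⟧)) {ξ : S⟦X⟧}
    (hξ : subst (X * u) ξ = (X + u : S⟦X⟧)) (a b : S⟦X⟧) :
    let g : S⟦X⟧ := subst (X * u) a + X * subst (X * u) b
    g + subst u g = 2 * subst (X * u) a + subst (X * u) ξ * subst (X * u) b := by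
  have hsubst := HasSubst.of_constantCoeff_zero' hu
  simp only [subst_add hsubst, subst_mul hsubst, subst_X hsubst, subst_subst_X_mul_self hu hinv,
    hξ]
  ring

theorem setOf_add_subst_eq (hu : constantCoeff u = 0) (hinv : subst u u = (X : S⟦X⟧))
    {ξ : S⟦X⟧} (hξ : subst (X * u) ξ = (X + u : S⟦X⟧)) (V : S⟦X⟧ˣ)
    (hV : X * u = X ^ 2 * (V : S⟦X⟧)) :
    {f : S⟦X⟧ | ∃ g, f = g + subst u g} =
      {f | ∃ a b : S⟦X⟧, f = 2 * subst (X * u) a + subst (X * u) ξ * subst (X * u) b} := by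
  ext f
  constructor
  · rintro ⟨g, rfl⟩
    obtain ⟨a, b, rfl⟩ := hV ▸ exists_eq_subst_add_X_mul_subst V g
    exact ⟨a, b, subst_add_X_mul_subst_add_subst hu hinv hξ a b⟩
  · rintro ⟨a, b, rfl⟩
    exact ⟨_, (subst_add_X_mul_subst_add_subst hu hinv hξ a b).symm⟩

end Involution

end PowerSeries

theorem norms_eq_ideal_two_xi_general
    {S : Type*} [CommRing S]
    (ubar : PowerSeries S) (h0 : PowerSeries.constantCoeff ubar = 0)
    (hcong : ubar + PowerSeries.X ∈ Ideal.span {(PowerSeries.X : PowerSeries S) ^ 2})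
    (hinv : PowerSeries.substInto ubar ubar = PowerSeries.X)
    (ξ : PowerSeries S)
    (hξ : PowerSeries.substInto (PowerSeries.X * ubar) ξ = PowerSeries.X + ubar) :
    ({f : PowerSeries S | ∃ g : PowerSeries S, f = g + PowerSeries.substInto ubar g} =
      {f : PowerSeries S | ∃ a b : PowerSeries S,
        f = 2 * PowerSeries.substInto (PowerSeries.X * ubar) a +
          PowerSeries.substInto (PowerSeries.X * ubar) ξ *
            PowerSeries.substInto (PowerSeries.X * ubar) b}) ∧
    ∀ g : PowerSeries S,
      (∃ h : PowerSeries S,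
        PowerSeries.substInto (PowerSeries.X * ubar) g = h + PowerSeries.substInto ubar h) ↔
        g ∈ Ideal.span {(2 : PowerSeries S), ξ} := by
  have hw : constantCoeff (X * ubar) = 0 := by simp
  simp only [substInto_eq_subst h0, substInto_eq_subst hw] at hinv hξ ⊢
  obtain ⟨V, hV⟩ := exists_eq_X_mul_unit_of_add_X_mem_span_X_sq hcong
  have hwV : X * ubar = X ^ 2 * (V : S⟦X⟧) := by rw [hV]; ring
  have hnorms := setOf_add_subst_eq h0 hinv hξ V hwV
  refine ⟨hnorms, fun g => ?_⟩
  set w : S⟦X⟧ := X * ubar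
  have hinj := subst_injective_of_mem_nonZeroDivisors hw
    (hwV ▸ mul_mem (pow_mem MvPowerSeries.X_mem_nonzeroDivisors 2) V.isUnit.mem_nonZeroDivisors)
  have hsubst : ∀ a b : S⟦X⟧,
      2 * subst w a + subst w ξ * subst w b = (subst w (a * 2 + b * ξ) : S⟦X⟧) := fun a b => by
    rw [← coe_substAlgHom (HasSubst.of_constantCoeff_zero' hw)]
    simp only [map_add, map_mul, map_ofNat]
    ring
  have hg := Set.ext_iff.mp hnorms (subst w g)
  simp only [Set.mem_ofPred_eq, hsubst, hinj.eq_iff] at hg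
  rw [Ideal.mem_span_pair]
  exact hg.trans (exists₂_congr fun a b => eq_comm)

/-- The set of norms `{g + σ(g)}` equals the ideal of the subring
`S[[w]] = {a(w) : a ∈ S[[t]]}` generated by `2` and `ξ(w)` (whose elements are
exactly `2·a(w) + ξ(w)·b(w)`), and consequently the quotient of the fixed ring
`S[[w]]` by the norms corresponds, under the isomorphism `S[[t]] ≅ S[[w]]`,
`g ↦ g(w)`, to `S[[t]]/(2, ξ(t))`: the preimage of the norms is exactly the
ideal `(2, ξ)` of `S[[t]]`. -/
theorem norms_eq_ideal_two_xi
    {S : Type*} [CommRing S] (h2 : (2 : S) ∈ nonZeroDivisors S)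
    (ubar : PowerSeries S) (h0 : PowerSeries.constantCoeff ubar = 0)
    (hcong : ubar + PowerSeries.X ∈ Ideal.span {(PowerSeries.X : PowerSeries S) ^ 2})
    (hinv : PowerSeries.substInto ubar ubar = PowerSeries.X)
    (ξ : PowerSeries S)
    (hξ : PowerSeries.substInto (PowerSeries.X * ubar) ξ = PowerSeries.X + ubar) :
    ({f : PowerSeries S | ∃ g : PowerSeries S, f = g + PowerSeries.substInto ubar g} =
      {f : PowerSeries S | ∃ a b : PowerSeries S,
        f = 2 * PowerSeries.substInto (PowerSeries.X * ubar) a +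
          PowerSeries.substInto (PowerSeries.X * ubar) ξ *
            PowerSeries.substInto (PowerSeries.X * ubar) b}) ∧
    ∀ g : PowerSeries S,
      (∃ h : PowerSeries S,
        PowerSeries.substInto (PowerSeries.X * ubar) g = h + PowerSeries.substInto ubar h) ↔
        g ∈ Ideal.span {(2 : PowerSeries S), ξ} :=
  norms_eq_ideal_two_xi_general ubar h0 hcong hinv ξ hξ
end

section
/- Let S be a commutative ring in which 2 is a nonzerodivisor, let ū ∈ S[[u]] be a power series with zero constant term satisfying ū ≡ −u mod (u²), and let σ : S[[u]] → S[[u]] be the S-algebra endomorphism given by substituting u ↦ ū; assume σ is an involution, i.e. σ(ū) = u. Let ξ ∈ S[[t]] be the unique power series with ξ(u·ū) = u + ū. Suppose I ⊆ S is an ideal with 2 ∈ I, d ≥ 1, and b ∈ S are such that ū ≡ u + b·u^{2d} modulo the ideal of S[[u]] generated by the image of I and u^{2d+1}. Then ξ ≡ b·t^{d} modulo the ideal of S[[t]] generated by the image of I and t^{d+1}. -/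
/-!
Everything happens modulo `I`, where `2 = 0`. There `ū ≡ u mod u^{2d}`, so
`u·ū ≡ u² mod u^{2d+1}` and the coefficients of `ξ(u·ū)` and `ξ(u²)` agree up to degree `2d`.
Hence for `k ≤ d` the coefficient of `t^k` in `ξ` is that of `u^{2k}` in
`u + ū ≡ b·u^{2d} mod u^{2d+1}`.
-/

open PowerSeries

namespace PowerSeries

variable {R : Type*} [CommRing R]

@[simp]
lemma coeff_substInto (w f : R⟦X⟧) (n : ℕ) :
    coeff n (substInto w f) = ∑ k ∈ Finset.range (n + 1), coeff k f * coeff n (w ^ k) :=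
  coeff_mk _ _

lemma map_substInto {T : Type*} [CommRing T] (π : R →+* T) (w f : R⟦X⟧) :
    map π (substInto w f) = substInto (map π w) (map π f) := by
  ext n
  simp [coeff_map, ← map_pow]

lemma coeff_substInto_congr {w w' : R⟦X⟧} {m n : ℕ} (h : X ^ m ∣ w - w') (hn : n < m)
    (f : R⟦X⟧) : coeff n (substInto w f) = coeff n (substInto w' f) := by
  simp only [coeff_substInto]
  refine Finset.sum_congr rfl fun k _ => congrArg _ ?_
  rw [← sub_eq_zero, ← map_sub]
  exact X_pow_dvd_iff.mp (h.trans (sub_dvd_pow_sub_pow w w' k)) n hn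

lemma coeff_two_mul_substInto_X_sq (f : R⟦X⟧) (k : ℕ) :
    coeff (2 * k) (substInto (X ^ 2) f) = coeff k f := by
  rw [coeff_substInto, Finset.sum_eq_single k]
  · simp [← pow_mul, mul_comm]
  · intro j _ hjk
    simp [← pow_mul, coeff_X_pow, mul_comm]
    omega
  · intro hk
    exact absurd (Finset.mem_range.mpr (by omega)) hk

lemma mem_span_X_pow_sup_map_C_iff (I : Ideal R) (n : ℕ) (f : R⟦X⟧) :
    f ∈ Ideal.span {X ^ n} ⊔ Ideal.map C I ↔ X ^ n ∣ map (Ideal.Quotient.mk I) f := by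
  constructor
  · intro h
    obtain ⟨p, hp, q, hq, rfl⟩ := Submodule.mem_sup.mp h
    obtain ⟨c, rfl⟩ := Ideal.mem_span_singleton.mp hp
    have hle : Ideal.map C I ≤ RingHom.ker (map (Ideal.Quotient.mk I)) :=
      Ideal.map_le_iff_le_comap.mpr fun a ha => by
        simp [map_C, Ideal.Quotient.eq_zero_iff_mem.mpr ha]
    have hq0 : map (Ideal.Quotient.mk I) q = 0 := hle hq
    rw [map_add, hq0, add_zero, map_mul, map_pow, map_X]
    exact dvd_mul_right _ _
  · -- `Ideal.map C I` can be smaller than the kernel `I⟦X⟧` of the reduction; modulo `X ^ n`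
    -- only the truncation `T` of `f` matters, and it lies in `Ideal.map C I`.
    intro hdvd
    set T : R⟦X⟧ := ∑ k ∈ Finset.range n, C (coeff k f) * X ^ k
    have hT : T ∈ Ideal.map C I := by
      refine Ideal.sum_mem _ fun k hk => Ideal.mul_mem_right _ _ (Ideal.mem_map_of_mem _ ?_)
      have := X_pow_dvd_iff.mp hdvd k (Finset.mem_range.mp hk)
      rwa [coeff_map, Ideal.Quotient.eq_zero_iff_mem] at this
    have hfT : f - T ∈ Ideal.span {X ^ n} := by
      rw [Ideal.mem_span_singleton, X_pow_dvd_iff]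
      intro m hm
      simp [T, coeff_X_pow, hm]
    simpa using Submodule.add_mem_sup hfT hT

lemma X_pow_dvd_sub_of_substInto_X_mul_eq (h2 : (2 : R) = 0) {v η : R⟦X⟧} {c : R} {d : ℕ}
    (hη : substInto (X * v) η = X + v) (hv : X ^ (2 * d + 1) ∣ v - (X + C c * X ^ (2 * d))) :
    X ^ (d + 1) ∣ η - C c * X ^ d := by
  have hvX : X ^ (2 * d) ∣ v - X := by
    rw [show v - X = v - (X + C c * X ^ (2 * d)) + C c * X ^ (2 * d) by ring]
    exact dvd_add ((pow_dvd_pow X (Nat.le_succ _)).trans hv) (dvd_mul_left _ _)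
  have hsq : X ^ (2 * d + 1) ∣ X * v - X ^ 2 := by
    rw [pow_succ', show X * v - X ^ 2 = X * (v - X) by ring]
    exact mul_dvd_mul_left X hvX
  have hsum : X ^ (2 * d + 1) ∣ X + v - C c * X ^ (2 * d) := by
    have h2X : (2 : R⟦X⟧) = 0 := by rw [← map_ofNat C 2, h2, map_zero]
    rwa [show X + v - C c * X ^ (2 * d) = v - (X + C c * X ^ (2 * d)) + 2 * X by ring, h2X,
      zero_mul, add_zero]
  rw [X_pow_dvd_iff]
  intro k hk
  have hcoeff : coeff (2 * k) (X + v) = coeff (2 * k) (C c * X ^ (2 * d)) := by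
    rw [← sub_eq_zero, ← map_sub]
    exact X_pow_dvd_iff.mp hsum _ (by omega)
  rw [map_sub, ← coeff_two_mul_substInto_X_sq, ← coeff_substInto_congr hsq (by omega), hη,
    hcoeff, sub_eq_zero]
  simp [coeff_X_pow]

end PowerSeries

theorem xi_leading_term_general
    {S : Type*} [CommRing S]
    (ubar : PowerSeries S)
    (ξ : PowerSeries S)
    (hξ : PowerSeries.substInto (PowerSeries.X * ubar) ξ = PowerSeries.X + ubar)
    (I : Ideal S) (h2I : (2 : S) ∈ I) (d : ℕ) (b : S)
    (hcong2 : ubar - (PowerSeries.X + PowerSeries.C b * PowerSeries.X ^ (2 * d)) ∈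
      Ideal.span {(PowerSeries.X : PowerSeries S) ^ (2 * d + 1)} ⊔
        Ideal.map (PowerSeries.C) I) :
    ξ - PowerSeries.C b * PowerSeries.X ^ d ∈
      Ideal.span {(PowerSeries.X : PowerSeries S) ^ (d + 1)} ⊔
        Ideal.map (PowerSeries.C) I := by
  rw [mem_span_X_pow_sup_map_C_iff] at hcong2 ⊢
  have h2 : (2 : S ⧸ I) = 0 := by
    simpa only [map_ofNat] using Ideal.Quotient.eq_zero_iff_mem.mpr h2I
  have hξ' := congrArg (map (Ideal.Quotient.mk I)) hξ
  rw [map_substInto] at hξ'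
  simp only [map_mul, map_add, map_X] at hξ'
  simpa using X_pow_dvd_sub_of_substInto_X_mul_eq h2 hξ' (by simpa using hcong2)

/-- If `ū ≡ u + b·u^{2d} mod (I, u^{2d+1})` with `2 ∈ I`, then the power series
`ξ` with `ξ(u·ū) = u + ū` satisfies `ξ ≡ b·t^d mod (I, t^{d+1})`. -/
theorem xi_leading_term
    {S : Type*} [CommRing S] (h2 : (2 : S) ∈ nonZeroDivisors S)
    (ubar : PowerSeries S) (h0 : PowerSeries.constantCoeff ubar = 0)
    (hcong : ubar + PowerSeries.X ∈ Ideal.span {(PowerSeries.X : PowerSeries S) ^ 2})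
    (hinv : PowerSeries.substInto ubar ubar = PowerSeries.X)
    (ξ : PowerSeries S)
    (hξ : PowerSeries.substInto (PowerSeries.X * ubar) ξ = PowerSeries.X + ubar)
    (I : Ideal S) (h2I : (2 : S) ∈ I) (d : ℕ) (hd : 1 ≤ d) (b : S)
    (hcong2 : ubar - (PowerSeries.X + PowerSeries.C b * PowerSeries.X ^ (2 * d)) ∈
      Ideal.span {(PowerSeries.X : PowerSeries S) ^ (2 * d + 1)} ⊔
        Ideal.map (PowerSeries.C) I) :
    ξ - PowerSeries.C b * PowerSeries.X ^ d ∈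
      Ideal.span {(PowerSeries.X : PowerSeries S) ^ (d + 1)} ⊔
        Ideal.map (PowerSeries.C) I :=
  xi_leading_term_general ubar ξ hξ I h2I d b hcong2
end
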